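/- In the dual bracket of the Galilei bialgebra ansatz, assume n_i = 0 for all i and β ≠ 0. If the Jacobi identity [X,[Y,Z]] + [Z,[X,Y]] + [Y,[Z,X]] = 0 holds for all X, Y, Z in the 7-dimensional subspace spanned by H̃, K̃₁, K̃₂, K̃₃, J̃₁, J̃₂, J̃₃ (this subspace is closed under the bracket), then necessarily ξ_i = 0 for all i and ω_{ij} = 0 for all i, j. -/
import Mathlib


/-- The Levi-Civita symbol on `{1,2,3}` (indexed by `Fin 3`). -/
def eps (i j k : Fin 3) : ℝ :=
  if (i, j, k) = (0, 1, 2) ∨ (i, j, k) = (1, 2, 0) ∨ (i, j, k) = (2, 0, 1) then 1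
  else if (i, j, k) = (2, 1, 0) ∨ (i, j, k) = (1, 0, 2) ∨ (i, j, k) = (0, 2, 1) then -1
  else 0

/-- The Kronecker delta on `Fin 3`. -/
def kron (i j : Fin 3) : ℝ := if i = j then 1 else 0

/-- The 10-dimensional real vector space with basis `H̃, P̃_i, K̃_i, J̃_i`, an element
being recorded by its coefficients `(h, p, k, j)` in this basis. -/
abbrev DualV : Type := ℝ × (Fin 3 → ℝ) × (Fin 3 → ℝ) × (Fin 3 → ℝ)

/-- The dual bracket of the Galilei bialgebra ansatz: the antisymmetric bilinear
bracket on the span of `H̃, P̃_i, K̃_i, J̃_i` determined by the structure constants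
(with parameters `α, γ, φ, λ, ξ, n ∈ ℝ³`, `β, v, θ, ρ ∈ ℝ`, `σ, χ, ω ∈ M₃(ℝ)`):
`[H̃, J̃_k] = ε_{ikl} α_l J̃_i`;
`[H̃, P̃_k] = γ_k H̃ + (β δ_{ik} + ε_{ikl} α_l) P̃_i + ε_{ikl} φ_l J̃_i`;
`[H̃, K̃_k] = (β δ_{ik} + ε_{ikl} α_l) K̃_i + ε_{ikl} γ_l J̃_i`;
`[K̃_k, J̃_l] = 2(n_k δ_{li} − n_i δ_{kl}) K̃_i + 2(ε_{ikn} ω_{ln} + ε_{iln} ω_{nk}) J̃_i`;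
`[P̃_l, P̃_m] = (χ_{lm} − χ_{ml}) H̃ + 2 ε_{klm}(ρ δ_{ki} + (1/2)(σ_{ik} − σ_{nn} δ_{ik})) P̃_i`
`  + 2(v ε_{ilm} + (1/2)(φ_l δ_{im} − φ_m δ_{il})) K̃_i + 2(λ_l δ_{im} − λ_m δ_{il}) J̃_i`;
`[P̃_k, K̃_l] = (2 ξ_n ε_{nkl} − θ δ_{kl}) H̃ + (2 ε_{nki} ω_{nl} − ω_{nn} ε_{lki}) P̃_i`
`  + (ρ ε_{kli} − ε_{lin} σ_{kn} − δ_{ki} γ_l) K̃_i + (ε_{ikn} χ_{nl} + ε_{iln} χ_{kn}) J̃_i`;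
`[P̃_k, J̃_l] = (2 ω_{lk} − ω_{nn} δ_{lk}) H̃ + 2(n_k δ_{li} − n_i δ_{kl}) P̃_i`
`  − (β ε_{kli} + α_l δ_{ki}) K̃_i + (ε_{ikn} σ_{nl} + ε_{iln} σ_{kn}) J̃_i`;
`[K̃_m, K̃_n] = 2 ε_{kmn} ω_{ki} K̃_i + 2(ξ_m δ_{ni} − ξ_n δ_{mi}) J̃_i`;
`[J̃_k, J̃_l] = 2(n_k δ_{li} − n_l δ_{ki}) J̃_i`. -/
noncomputable def dualBracket (α γv φv lam ξ nv : Fin 3 → ℝ) (β v θ ρ : ℝ)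
    (σ χ ω : Fin 3 → Fin 3 → ℝ) (X Y : DualV) : DualV :=
  -- coefficients of `X` and `Y` on `H̃, P̃, K̃, J̃`
  let h : ℝ := X.1; let p := X.2.1; let κ := X.2.2.1; let j := X.2.2.2
  let h' : ℝ := Y.1; let p' := Y.2.1; let κ' := Y.2.2.1; let j' := Y.2.2.2
  ( -- H̃ component
    (∑ k, (h * p' k - h' * p k) * γv k)
    + (∑ l, ∑ m, p l * p' m * (χ l m - χ m l))
    + (∑ k, ∑ l, (p k * κ' l - p' k * κ l) * (2 * (∑ n, ξ n * eps n k l) - θ * kron k l))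
    + (∑ k, ∑ l, (p k * j' l - p' k * j l) * (2 * ω l k - (∑ n, ω n n) * kron l k)),
    -- P̃ component
    fun i =>
      (∑ k, (h * p' k - h' * p k) * (β * kron i k + ∑ l, eps i k l * α l))
      + (∑ l, ∑ m, p l * p' m *
          (2 * ∑ k, eps k l m * (ρ * kron k i + (1/2) * (σ i k - (∑ n, σ n n) * kron i k))))
      + (∑ k, ∑ l, (p k * κ' l - p' k * κ l) *
          (2 * (∑ n, eps n k i * ω n l) - (∑ n, ω n n) * eps l k i))
      + (∑ k, ∑ l, (p k * j' l - p' k * j l) * (2 * (nv k * kron l i - nv i * kron k l))),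
    -- K̃ component
    fun i =>
      (∑ k, (h * κ' k - h' * κ k) * (β * kron i k + ∑ l, eps i k l * α l))
      + (∑ k, ∑ l, (κ k * j' l - κ' k * j l) * (2 * (nv k * kron l i - nv i * kron k l)))
      + (∑ l, ∑ m, p l * p' m *
          (2 * (v * eps i l m + (1/2) * (φv l * kron i m - φv m * kron i l))))
      + (∑ k, ∑ l, (p k * κ' l - p' k * κ l) *
          (ρ * eps k l i - (∑ n, eps l i n * σ k n) - kron k i * γv l))
      + (∑ k, ∑ l, (p k * j' l - p' k * j l) * (-(β * eps k l i + α l * kron k i)))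
      + (∑ m, ∑ n, κ m * κ' n * (2 * ∑ k, eps k m n * ω k i)),
    -- J̃ component
    fun i =>
      (∑ k, (h * j' k - h' * j k) * (∑ l, eps i k l * α l))
      + (∑ k, (h * p' k - h' * p k) * (∑ l, eps i k l * φv l))
      + (∑ k, (h * κ' k - h' * κ k) * (∑ l, eps i k l * γv l))
      + (∑ k, ∑ l, (κ k * j' l - κ' k * j l) *
          (2 * ∑ n, (eps i k n * ω l n + eps i l n * ω n k)))
      + (∑ l, ∑ m, p l * p' m * (2 * (lam l * kron i m - lam m * kron i l)))
      + (∑ k, ∑ l, (p k * κ' l - p' k * κ l) * (∑ n, (eps i k n * χ n l + eps i l n * χ k n)))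
      + (∑ k, ∑ l, (p k * j' l - p' k * j l) * (∑ n, (eps i k n * σ n l + eps i l n * σ k n)))
      + (∑ m, ∑ n, κ m * κ' n * (2 * (ξ m * kron n i - ξ n * kron m i)))
      + (∑ k, ∑ l, j k * j' l * (2 * (nv k * kron l i - nv l * kron k i))) )

/-- A bracket operation on `DualV` satisfies the Jacobi identity. -/
def JacobiHolds (br : DualV → DualV → DualV) : Prop :=
  ∀ X Y Z : DualV, br X (br Y Z) + br Z (br X Y) + br Y (br Z X) = 0

/-- In the dual bracket of the Galilei bialgebra ansatz with `n = 0` and `β ≠ 0`,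
if the Jacobi identity holds on the 7-dimensional subspace spanned by
`H̃, K̃₁, K̃₂, K̃₃, J̃₁, J̃₂, J̃₃` (the elements with vanishing `P̃`-component),
then necessarily `ξ = 0` and `ω = 0`. -/
lemma epsv000 : eps 0 0 0 = (0:ℝ) := by simp only [eps]; norm_num [Prod.ext_iff, Fin.ext_iff]
lemma epsv001 : eps 0 0 1 = (0:ℝ) := by simp only [eps]; norm_num [Prod.ext_iff, Fin.ext_iff]
lemma epsv002 : eps 0 0 2 = (0:ℝ) := by simp only [eps]; norm_num [Prod.ext_iff, Fin.ext_iff]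
lemma epsv010 : eps 0 1 0 = (0:ℝ) := by simp only [eps]; norm_num [Prod.ext_iff, Fin.ext_iff]
lemma epsv011 : eps 0 1 1 = (0:ℝ) := by simp only [eps]; norm_num [Prod.ext_iff, Fin.ext_iff]
lemma epsv012 : eps 0 1 2 = (1:ℝ) := by simp only [eps]; norm_num [Prod.ext_iff, Fin.ext_iff]
lemma epsv020 : eps 0 2 0 = (0:ℝ) := by simp only [eps]; norm_num [Prod.ext_iff, Fin.ext_iff]
lemma epsv021 : eps 0 2 1 = (-1:ℝ) := by simp only [eps]; norm_num [Prod.ext_iff, Fin.ext_iff]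
lemma epsv022 : eps 0 2 2 = (0:ℝ) := by simp only [eps]; norm_num [Prod.ext_iff, Fin.ext_iff]
lemma epsv100 : eps 1 0 0 = (0:ℝ) := by simp only [eps]; norm_num [Prod.ext_iff, Fin.ext_iff]
lemma epsv101 : eps 1 0 1 = (0:ℝ) := by simp only [eps]; norm_num [Prod.ext_iff, Fin.ext_iff]
lemma epsv102 : eps 1 0 2 = (-1:ℝ) := by simp only [eps]; norm_num [Prod.ext_iff, Fin.ext_iff]
lemma epsv110 : eps 1 1 0 = (0:ℝ) := by simp only [eps]; norm_num [Prod.ext_iff, Fin.ext_iff]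
lemma epsv111 : eps 1 1 1 = (0:ℝ) := by simp only [eps]; norm_num [Prod.ext_iff, Fin.ext_iff]
lemma epsv112 : eps 1 1 2 = (0:ℝ) := by simp only [eps]; norm_num [Prod.ext_iff, Fin.ext_iff]
lemma epsv120 : eps 1 2 0 = (1:ℝ) := by simp only [eps]; norm_num [Prod.ext_iff, Fin.ext_iff]
lemma epsv121 : eps 1 2 1 = (0:ℝ) := by simp only [eps]; norm_num [Prod.ext_iff, Fin.ext_iff]
lemma epsv122 : eps 1 2 2 = (0:ℝ) := by simp only [eps]; norm_num [Prod.ext_iff, Fin.ext_iff]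
lemma epsv200 : eps 2 0 0 = (0:ℝ) := by simp only [eps]; norm_num [Prod.ext_iff, Fin.ext_iff]
lemma epsv201 : eps 2 0 1 = (1:ℝ) := by simp only [eps]; norm_num [Prod.ext_iff, Fin.ext_iff]
lemma epsv202 : eps 2 0 2 = (0:ℝ) := by simp only [eps]; norm_num [Prod.ext_iff, Fin.ext_iff]
lemma epsv210 : eps 2 1 0 = (-1:ℝ) := by simp only [eps]; norm_num [Prod.ext_iff, Fin.ext_iff]
lemma epsv211 : eps 2 1 1 = (0:ℝ) := by simp only [eps]; norm_num [Prod.ext_iff, Fin.ext_iff]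
lemma epsv212 : eps 2 1 2 = (0:ℝ) := by simp only [eps]; norm_num [Prod.ext_iff, Fin.ext_iff]
lemma epsv220 : eps 2 2 0 = (0:ℝ) := by simp only [eps]; norm_num [Prod.ext_iff, Fin.ext_iff]
lemma epsv221 : eps 2 2 1 = (0:ℝ) := by simp only [eps]; norm_num [Prod.ext_iff, Fin.ext_iff]
lemma epsv222 : eps 2 2 2 = (0:ℝ) := by simp only [eps]; norm_num [Prod.ext_iff, Fin.ext_iff]
lemma kronv00 : kron 0 0 = (1:ℝ) := by simp only [kron]; norm_num [Fin.ext_iff]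
lemma kronv01 : kron 0 1 = (0:ℝ) := by simp only [kron]; norm_num [Fin.ext_iff]
lemma kronv02 : kron 0 2 = (0:ℝ) := by simp only [kron]; norm_num [Fin.ext_iff]
lemma kronv10 : kron 1 0 = (0:ℝ) := by simp only [kron]; norm_num [Fin.ext_iff]
lemma kronv11 : kron 1 1 = (1:ℝ) := by simp only [kron]; norm_num [Fin.ext_iff]
lemma kronv12 : kron 1 2 = (0:ℝ) := by simp only [kron]; norm_num [Fin.ext_iff]
lemma kronv20 : kron 2 0 = (0:ℝ) := by simp only [kron]; norm_num [Fin.ext_iff]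
lemma kronv21 : kron 2 1 = (0:ℝ) := by simp only [kron]; norm_num [Fin.ext_iff]
lemma kronv22 : kron 2 2 = (1:ℝ) := by simp only [kron]; norm_num [Fin.ext_iff]

/-- Reduced bracket on the span of `H̃, K̃, J̃` (vanishing `P̃`-component), with `n = 0`. -/
noncomputable def rb (α γv ξ : Fin 3 → ℝ) (β : ℝ) (ω : Fin 3 → Fin 3 → ℝ)
    (X Y : DualV) : DualV :=
  let h : ℝ := X.1; let κ := X.2.2.1; let j := X.2.2.2
  let h' : ℝ := Y.1; let κ' := Y.2.2.1; let j' := Y.2.2.2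
  (0, 0,
   fun i => (∑ k, (h * κ' k - h' * κ k) * (β * kron i k + ∑ l, eps i k l * α l))
     + (∑ m, ∑ n, κ m * κ' n * (2 * ∑ k, eps k m n * ω k i)),
   fun i => (∑ k, (h * j' k - h' * j k) * (∑ l, eps i k l * α l))
     + (∑ k, (h * κ' k - h' * κ k) * (∑ l, eps i k l * γv l))
     + (∑ k, ∑ l, (κ k * j' l - κ' k * j l) * (2 * ∑ n, (eps i k n * ω l n + eps i l n * ω n k)))
     + (∑ m, ∑ n, κ m * κ' n * (2 * (ξ m * kron n i - ξ n * kron m i))))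

lemma dualBracket_eq_rb (α γv φv lam ξ nv : Fin 3 → ℝ) (β v θ ρ : ℝ)
    (σ χ ω : Fin 3 → Fin 3 → ℝ) (hn : ∀ i, nv i = 0) (X Y : DualV)
    (hX : X.2.1 = 0) (hY : Y.2.1 = 0) :
    dualBracket α γv φv lam ξ nv β v θ ρ σ χ ω X Y = rb α γv ξ β ω X Y := by
  obtain ⟨h, p, κ, j⟩ := X
  obtain ⟨h', p', κ', j'⟩ := Y
  replace hX : p = 0 := hX
  replace hY : p' = 0 := hY
  subst hX; subst hY
  simp [dualBracket, rb, hn]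
  exact funext fun _ => rfl

lemma final (α γv ξ : Fin 3 → ℝ) (β : ℝ) (ω : Fin 3 → Fin 3 → ℝ) (hβ : β ≠ 0)
    (hek20 : (-2)*α 0*ω 1 0 + (2)*α 1*ω 0 0 + (-2)*α 1*ω 2 2 + (2)*α 2*ω 2 1 + (-2)*β*ω 2 0 = 0)
    (hek21 : (-2)*α 0*ω 1 1 + (2)*α 0*ω 2 2 + (2)*α 1*ω 0 1 + (-2)*α 2*ω 2 0 + (-2)*β*ω 2 1 = 0)
    (hek22 : (-2)*α 0*ω 1 2 + (-2)*α 0*ω 2 1 + (2)*α 1*ω 0 2 + (2)*α 1*ω 2 0 + (-2)*β*ω 2 2 = 0)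
    (hek10 : (-2)*α 0*ω 2 0 + (2)*α 1*ω 1 2 + (2)*α 2*ω 0 0 + (-2)*α 2*ω 1 1 + (2)*β*ω 1 0 = 0)
    (hek11 : (-2)*α 0*ω 1 2 + (-2)*α 0*ω 2 1 + (2)*α 2*ω 0 1 + (2)*α 2*ω 1 0 + (2)*β*ω 1 1 = 0)
    (hek12 : (2)*α 0*ω 1 1 + (-2)*α 0*ω 2 2 + (-2)*α 1*ω 1 0 + (2)*α 2*ω 0 2 + (2)*β*ω 1 2 = 0)
    (hek00 : (-2)*α 1*ω 0 2 + (-2)*α 1*ω 2 0 + (2)*α 2*ω 0 1 + (2)*α 2*ω 1 0 + (-2)*β*ω 0 0 = 0)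
    (hek01 : (2)*α 0*ω 0 2 + (-2)*α 1*ω 2 1 + (-2)*α 2*ω 0 0 + (2)*α 2*ω 1 1 + (-2)*β*ω 0 1 = 0)
    (hek02 : (-2)*α 0*ω 0 1 + (2)*α 1*ω 0 0 + (-2)*α 1*ω 2 2 + (2)*α 2*ω 1 2 + (-2)*β*ω 0 2 = 0)
    (heja : (-2)*α 0*ξ 2 + (2)*α 2*ξ 0 + (4)*β*ξ 1 + (-2)*γv 0*ω 1 0 + (-2)*γv 1*ω 1 1 + (-2)*γv 2*ω 1 2 = 0)
    (hejb : (-2)*α 1*ξ 2 + (2)*α 2*ξ 1 + (-4)*β*ξ 0 + (2)*γv 0*ω 0 0 + (2)*γv 1*ω 0 1 + (2)*γv 2*ω 0 2 = 0)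
    (hejc : (2)*α 0*ξ 1 + (-2)*α 1*ξ 0 + (4)*β*ξ 2 + (-2)*γv 0*ω 2 0 + (-2)*γv 1*ω 2 1 + (-2)*γv 2*ω 2 2 = 0) :
    (∀ i, ξ i = 0) ∧ (∀ i j, ω i j = 0) := by
  have hsum : β * (ω 0 0 ^ 2 + ω 0 1 ^ 2 + ω 0 2 ^ 2 + ω 1 0 ^ 2 + ω 1 1 ^ 2 + ω 1 2 ^ 2 + ω 2 0 ^ 2 + ω 2 1 ^ 2 + ω 2 2 ^ 2) = 0 := by
    linear_combination (-1/2) * ω 2 0 * hek20 + (-1/2) * ω 2 1 * hek21 + (-1/2) * ω 2 2 * hek22 + (1/2) * ω 1 0 * hek10 + (1/2) * ω 1 1 * hek11 + (1/2) * ω 1 2 * hek12 + (-1/2) * ω 0 0 * hek00 + (-1/2) * ω 0 1 * hek01 + (-1/2) * ω 0 2 * hek02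
  have hsq : ω 0 0 ^ 2 + ω 0 1 ^ 2 + ω 0 2 ^ 2 + ω 1 0 ^ 2 + ω 1 1 ^ 2 + ω 1 2 ^ 2 + ω 2 0 ^ 2 + ω 2 1 ^ 2 + ω 2 2 ^ 2 = 0 := by
    rcases mul_eq_zero.mp hsum with h | h
    · exact absurd h hβ
    · exact h
  have hom00 : ω 0 0 = 0 := by
    have h2 : ω 0 0 ^ 2 = 0 := le_antisymm (by linarith [sq_nonneg (ω 0 1) , sq_nonneg (ω 0 2) , sq_nonneg (ω 1 0) , sq_nonneg (ω 1 1) , sq_nonneg (ω 1 2) , sq_nonneg (ω 2 0) , sq_nonneg (ω 2 1) , sq_nonneg (ω 2 2)]) (sq_nonneg _)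
    exact pow_eq_zero_iff two_ne_zero |>.mp h2
  have hom01 : ω 0 1 = 0 := by
    have h2 : ω 0 1 ^ 2 = 0 := le_antisymm (by linarith [sq_nonneg (ω 0 0) , sq_nonneg (ω 0 2) , sq_nonneg (ω 1 0) , sq_nonneg (ω 1 1) , sq_nonneg (ω 1 2) , sq_nonneg (ω 2 0) , sq_nonneg (ω 2 1) , sq_nonneg (ω 2 2)]) (sq_nonneg _)
    exact pow_eq_zero_iff two_ne_zero |>.mp h2
  have hom02 : ω 0 2 = 0 := by
    have h2 : ω 0 2 ^ 2 = 0 := le_antisymm (by linarith [sq_nonneg (ω 0 0) , sq_nonneg (ω 0 1) , sq_nonneg (ω 1 0) , sq_nonneg (ω 1 1) , sq_nonneg (ω 1 2) , sq_nonneg (ω 2 0) , sq_nonneg (ω 2 1) , sq_nonneg (ω 2 2)]) (sq_nonneg _)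
    exact pow_eq_zero_iff two_ne_zero |>.mp h2
  have hom10 : ω 1 0 = 0 := by
    have h2 : ω 1 0 ^ 2 = 0 := le_antisymm (by linarith [sq_nonneg (ω 0 0) , sq_nonneg (ω 0 1) , sq_nonneg (ω 0 2) , sq_nonneg (ω 1 1) , sq_nonneg (ω 1 2) , sq_nonneg (ω 2 0) , sq_nonneg (ω 2 1) , sq_nonneg (ω 2 2)]) (sq_nonneg _)
    exact pow_eq_zero_iff two_ne_zero |>.mp h2
  have hom11 : ω 1 1 = 0 := by
    have h2 : ω 1 1 ^ 2 = 0 := le_antisymm (by linarith [sq_nonneg (ω 0 0) , sq_nonneg (ω 0 1) , sq_nonneg (ω 0 2) , sq_nonneg (ω 1 0) , sq_nonneg (ω 1 2) , sq_nonneg (ω 2 0) , sq_nonneg (ω 2 1) , sq_nonneg (ω 2 2)]) (sq_nonneg _)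
    exact pow_eq_zero_iff two_ne_zero |>.mp h2
  have hom12 : ω 1 2 = 0 := by
    have h2 : ω 1 2 ^ 2 = 0 := le_antisymm (by linarith [sq_nonneg (ω 0 0) , sq_nonneg (ω 0 1) , sq_nonneg (ω 0 2) , sq_nonneg (ω 1 0) , sq_nonneg (ω 1 1) , sq_nonneg (ω 2 0) , sq_nonneg (ω 2 1) , sq_nonneg (ω 2 2)]) (sq_nonneg _)
    exact pow_eq_zero_iff two_ne_zero |>.mp h2
  have hom20 : ω 2 0 = 0 := by
    have h2 : ω 2 0 ^ 2 = 0 := le_antisymm (by linarith [sq_nonneg (ω 0 0) , sq_nonneg (ω 0 1) , sq_nonneg (ω 0 2) , sq_nonneg (ω 1 0) , sq_nonneg (ω 1 1) , sq_nonneg (ω 1 2) , sq_nonneg (ω 2 1) , sq_nonneg (ω 2 2)]) (sq_nonneg _)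
    exact pow_eq_zero_iff two_ne_zero |>.mp h2
  have hom21 : ω 2 1 = 0 := by
    have h2 : ω 2 1 ^ 2 = 0 := le_antisymm (by linarith [sq_nonneg (ω 0 0) , sq_nonneg (ω 0 1) , sq_nonneg (ω 0 2) , sq_nonneg (ω 1 0) , sq_nonneg (ω 1 1) , sq_nonneg (ω 1 2) , sq_nonneg (ω 2 0) , sq_nonneg (ω 2 2)]) (sq_nonneg _)
    exact pow_eq_zero_iff two_ne_zero |>.mp h2
  have hom22 : ω 2 2 = 0 := by
    have h2 : ω 2 2 ^ 2 = 0 := le_antisymm (by linarith [sq_nonneg (ω 0 0) , sq_nonneg (ω 0 1) , sq_nonneg (ω 0 2) , sq_nonneg (ω 1 0) , sq_nonneg (ω 1 1) , sq_nonneg (ω 1 2) , sq_nonneg (ω 2 0) , sq_nonneg (ω 2 1)]) (sq_nonneg _)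
    exact pow_eq_zero_iff two_ne_zero |>.mp h2
  have hom : ∀ i j, ω i j = 0 := by
    intro i j; fin_cases i <;> fin_cases j <;> assumption
  have hxsum : β * (ξ 0 ^ 2 + ξ 1 ^ 2 + ξ 2 ^ 2) = 0 := by
    linear_combination (1/4) * ξ 1 * heja + (-1/4) * ξ 0 * hejb + (1/4) * ξ 2 * hejc + (1/2) * ξ 1 * γv 0 * hom 1 0 + (1/2) * ξ 0 * γv 0 * hom 0 0 + (1/2) * ξ 2 * γv 0 * hom 2 0 + (1/2) * ξ 1 * γv 1 * hom 1 1 + (1/2) * ξ 0 * γv 1 * hom 0 1 + (1/2) * ξ 2 * γv 1 * hom 2 1 + (1/2) * ξ 1 * γv 2 * hom 1 2 + (1/2) * ξ 0 * γv 2 * hom 0 2 + (1/2) * ξ 2 * γv 2 * hom 2 2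
  have hxsq : ξ 0 ^ 2 + ξ 1 ^ 2 + ξ 2 ^ 2 = 0 := by
    rcases mul_eq_zero.mp hxsum with h | h
    · exact absurd h hβ
    · exact h
  have hxi0 : ξ 0 = 0 := by
    have h2 : ξ 0 ^ 2 = 0 := le_antisymm (by linarith [sq_nonneg (ξ 1) , sq_nonneg (ξ 2)]) (sq_nonneg _)
    exact pow_eq_zero_iff two_ne_zero |>.mp h2
  have hxi1 : ξ 1 = 0 := by
    have h2 : ξ 1 ^ 2 = 0 := le_antisymm (by linarith [sq_nonneg (ξ 0) , sq_nonneg (ξ 2)]) (sq_nonneg _)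
    exact pow_eq_zero_iff two_ne_zero |>.mp h2
  have hxi2 : ξ 2 = 0 := by
    have h2 : ξ 2 ^ 2 = 0 := le_antisymm (by linarith [sq_nonneg (ξ 0) , sq_nonneg (ξ 1)]) (sq_nonneg _)
    exact pow_eq_zero_iff two_ne_zero |>.mp h2
  exact ⟨fun i => by fin_cases i <;> assumption, hom⟩

set_option maxHeartbeats 4000000 in
theorem jacobi_on_HKJ_forces_xi_omega_zero
    (α γv φv lam ξ nv : Fin 3 → ℝ) (β v θ ρ : ℝ) (σ χ ω : Fin 3 → Fin 3 → ℝ)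
    (hn : ∀ i, nv i = 0) (hβ : β ≠ 0)
    (hJac : ∀ X Y Z : DualV, X.2.1 = 0 → Y.2.1 = 0 → Z.2.1 = 0 →
      dualBracket α γv φv lam ξ nv β v θ ρ σ χ ω X
          (dualBracket α γv φv lam ξ nv β v θ ρ σ χ ω Y Z)
        + dualBracket α γv φv lam ξ nv β v θ ρ σ χ ω Z
          (dualBracket α γv φv lam ξ nv β v θ ρ σ χ ω X Y)
        + dualBracket α γv φv lam ξ nv β v θ ρ σ χ ω Y
          (dualBracket α γv φv lam ξ nv β v θ ρ σ χ ω Z X) = 0) :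
    (∀ i, ξ i = 0) ∧ (∀ i j, ω i j = 0) := by
  classical
  have red : ∀ X Y : DualV, X.2.1 = 0 → Y.2.1 = 0 →
      dualBracket α γv φv lam ξ nv β v θ ρ σ χ ω X Y = rb α γv ξ β ω X Y :=
    fun X Y hX hY => dualBracket_eq_rb α γv φv lam ξ nv β v θ ρ σ χ ω hn X Y hX hY
  have key : ∀ X Y Z : DualV, X.2.1 = 0 → Y.2.1 = 0 → Z.2.1 = 0 →
      rb α γv ξ β ω X (rb α γv ξ β ω Y Z) + rb α γv ξ β ω Z (rb α γv ξ β ω X Y)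
        + rb α γv ξ β ω Y (rb α γv ξ β ω Z X) = 0 := by
    intro X Y Z hX hY hZ
    have h := hJac X Y Z hX hY hZ
    rw [red Y Z hY hZ, red X Y hX hY, red Z X hZ hX,
      red X _ hX rfl, red Z _ hZ rfl, red Y _ hY rfl] at h
    exact h
  let Hv : DualV := (1, 0, 0, 0)
  let K : Fin 3 → DualV := fun i => (0, 0, (fun j => if j = i then 1 else 0), 0)
  have h01 := key Hv (K 0) (K 1) rfl rfl rfl
  have h02 := key Hv (K 0) (K 2) rfl rfl rfl
  have h12 := key Hv (K 1) (K 2) rfl rfl rfl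
  have ek20 := congrArg (fun X : DualV => X.2.2.1 0) h01
  norm_num [rb, Fin.sum_univ_three, Hv, K, epsv000, epsv001, epsv002, epsv010, epsv011, epsv012, epsv020, epsv021, epsv022, epsv100, epsv101, epsv102, epsv110, epsv111, epsv112, epsv120, epsv121, epsv122, epsv200, epsv201, epsv202, epsv210, epsv211, epsv212, epsv220, epsv221, epsv222, kronv00, kronv01, kronv02, kronv10, kronv11, kronv12, kronv20, kronv21, kronv22, Prod.fst_add, Prod.snd_add, Pi.add_apply, Prod.fst_zero, Prod.snd_zero, Pi.zero_apply] at ek20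
  have ek21 := congrArg (fun X : DualV => X.2.2.1 1) h01
  norm_num [rb, Fin.sum_univ_three, Hv, K, epsv000, epsv001, epsv002, epsv010, epsv011, epsv012, epsv020, epsv021, epsv022, epsv100, epsv101, epsv102, epsv110, epsv111, epsv112, epsv120, epsv121, epsv122, epsv200, epsv201, epsv202, epsv210, epsv211, epsv212, epsv220, epsv221, epsv222, kronv00, kronv01, kronv02, kronv10, kronv11, kronv12, kronv20, kronv21, kronv22, Prod.fst_add, Prod.snd_add, Pi.add_apply, Prod.fst_zero, Prod.snd_zero, Pi.zero_apply] at ek21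
  have ek22 := congrArg (fun X : DualV => X.2.2.1 2) h01
  norm_num [rb, Fin.sum_univ_three, Hv, K, epsv000, epsv001, epsv002, epsv010, epsv011, epsv012, epsv020, epsv021, epsv022, epsv100, epsv101, epsv102, epsv110, epsv111, epsv112, epsv120, epsv121, epsv122, epsv200, epsv201, epsv202, epsv210, epsv211, epsv212, epsv220, epsv221, epsv222, kronv00, kronv01, kronv02, kronv10, kronv11, kronv12, kronv20, kronv21, kronv22, Prod.fst_add, Prod.snd_add, Pi.add_apply, Prod.fst_zero, Prod.snd_zero, Pi.zero_apply] at ek22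
  have ek10 := congrArg (fun X : DualV => X.2.2.1 0) h02
  norm_num [rb, Fin.sum_univ_three, Hv, K, epsv000, epsv001, epsv002, epsv010, epsv011, epsv012, epsv020, epsv021, epsv022, epsv100, epsv101, epsv102, epsv110, epsv111, epsv112, epsv120, epsv121, epsv122, epsv200, epsv201, epsv202, epsv210, epsv211, epsv212, epsv220, epsv221, epsv222, kronv00, kronv01, kronv02, kronv10, kronv11, kronv12, kronv20, kronv21, kronv22, Prod.fst_add, Prod.snd_add, Pi.add_apply, Prod.fst_zero, Prod.snd_zero, Pi.zero_apply] at ek10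
  have ek11 := congrArg (fun X : DualV => X.2.2.1 1) h02
  norm_num [rb, Fin.sum_univ_three, Hv, K, epsv000, epsv001, epsv002, epsv010, epsv011, epsv012, epsv020, epsv021, epsv022, epsv100, epsv101, epsv102, epsv110, epsv111, epsv112, epsv120, epsv121, epsv122, epsv200, epsv201, epsv202, epsv210, epsv211, epsv212, epsv220, epsv221, epsv222, kronv00, kronv01, kronv02, kronv10, kronv11, kronv12, kronv20, kronv21, kronv22, Prod.fst_add, Prod.snd_add, Pi.add_apply, Prod.fst_zero, Prod.snd_zero, Pi.zero_apply] at ek11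
  have ek12 := congrArg (fun X : DualV => X.2.2.1 2) h02
  norm_num [rb, Fin.sum_univ_three, Hv, K, epsv000, epsv001, epsv002, epsv010, epsv011, epsv012, epsv020, epsv021, epsv022, epsv100, epsv101, epsv102, epsv110, epsv111, epsv112, epsv120, epsv121, epsv122, epsv200, epsv201, epsv202, epsv210, epsv211, epsv212, epsv220, epsv221, epsv222, kronv00, kronv01, kronv02, kronv10, kronv11, kronv12, kronv20, kronv21, kronv22, Prod.fst_add, Prod.snd_add, Pi.add_apply, Prod.fst_zero, Prod.snd_zero, Pi.zero_apply] at ek12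
  have ek00 := congrArg (fun X : DualV => X.2.2.1 0) h12
  norm_num [rb, Fin.sum_univ_three, Hv, K, epsv000, epsv001, epsv002, epsv010, epsv011, epsv012, epsv020, epsv021, epsv022, epsv100, epsv101, epsv102, epsv110, epsv111, epsv112, epsv120, epsv121, epsv122, epsv200, epsv201, epsv202, epsv210, epsv211, epsv212, epsv220, epsv221, epsv222, kronv00, kronv01, kronv02, kronv10, kronv11, kronv12, kronv20, kronv21, kronv22, Prod.fst_add, Prod.snd_add, Pi.add_apply, Prod.fst_zero, Prod.snd_zero, Pi.zero_apply] at ek00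
  have ek01 := congrArg (fun X : DualV => X.2.2.1 1) h12
  norm_num [rb, Fin.sum_univ_three, Hv, K, epsv000, epsv001, epsv002, epsv010, epsv011, epsv012, epsv020, epsv021, epsv022, epsv100, epsv101, epsv102, epsv110, epsv111, epsv112, epsv120, epsv121, epsv122, epsv200, epsv201, epsv202, epsv210, epsv211, epsv212, epsv220, epsv221, epsv222, kronv00, kronv01, kronv02, kronv10, kronv11, kronv12, kronv20, kronv21, kronv22, Prod.fst_add, Prod.snd_add, Pi.add_apply, Prod.fst_zero, Prod.snd_zero, Pi.zero_apply] at ek01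
  have ek02 := congrArg (fun X : DualV => X.2.2.1 2) h12
  norm_num [rb, Fin.sum_univ_three, Hv, K, epsv000, epsv001, epsv002, epsv010, epsv011, epsv012, epsv020, epsv021, epsv022, epsv100, epsv101, epsv102, epsv110, epsv111, epsv112, epsv120, epsv121, epsv122, epsv200, epsv201, epsv202, epsv210, epsv211, epsv212, epsv220, epsv221, epsv222, kronv00, kronv01, kronv02, kronv10, kronv11, kronv12, kronv20, kronv21, kronv22, Prod.fst_add, Prod.snd_add, Pi.add_apply, Prod.fst_zero, Prod.snd_zero, Pi.zero_apply] at ek02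
  have eja := congrArg (fun X : DualV => X.2.2.2 0) h01
  norm_num [rb, Fin.sum_univ_three, Hv, K, epsv000, epsv001, epsv002, epsv010, epsv011, epsv012, epsv020, epsv021, epsv022, epsv100, epsv101, epsv102, epsv110, epsv111, epsv112, epsv120, epsv121, epsv122, epsv200, epsv201, epsv202, epsv210, epsv211, epsv212, epsv220, epsv221, epsv222, kronv00, kronv01, kronv02, kronv10, kronv11, kronv12, kronv20, kronv21, kronv22, Prod.fst_add, Prod.snd_add, Pi.add_apply, Prod.fst_zero, Prod.snd_zero, Pi.zero_apply] at eja
  have ejb := congrArg (fun X : DualV => X.2.2.2 1) h01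
  norm_num [rb, Fin.sum_univ_three, Hv, K, epsv000, epsv001, epsv002, epsv010, epsv011, epsv012, epsv020, epsv021, epsv022, epsv100, epsv101, epsv102, epsv110, epsv111, epsv112, epsv120, epsv121, epsv122, epsv200, epsv201, epsv202, epsv210, epsv211, epsv212, epsv220, epsv221, epsv222, kronv00, kronv01, kronv02, kronv10, kronv11, kronv12, kronv20, kronv21, kronv22, Prod.fst_add, Prod.snd_add, Pi.add_apply, Prod.fst_zero, Prod.snd_zero, Pi.zero_apply] at ejb
  have ejc := congrArg (fun X : DualV => X.2.2.2 0) h02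
  norm_num [rb, Fin.sum_univ_three, Hv, K, epsv000, epsv001, epsv002, epsv010, epsv011, epsv012, epsv020, epsv021, epsv022, epsv100, epsv101, epsv102, epsv110, epsv111, epsv112, epsv120, epsv121, epsv122, epsv200, epsv201, epsv202, epsv210, epsv211, epsv212, epsv220, epsv221, epsv222, kronv00, kronv01, kronv02, kronv10, kronv11, kronv12, kronv20, kronv21, kronv22, Prod.fst_add, Prod.snd_add, Pi.add_apply, Prod.fst_zero, Prod.snd_zero, Pi.zero_apply] at ejc
  exact final α γv ξ β ω hβ (by linear_combination ek20) (by linear_combination ek21) (by linear_combination ek22) (by linear_combination ek10) (by linear_combination ek11) (by linear_combination ek12) (by linear_combination ek00) (by linear_combination ek01) (by linear_combination ek02) (by linear_combination eja) (by linear_combination ejb) (by linear_combination ejc)
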